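/- arXiv:2302.04487 — 3 statements merged into one kernel-verified Lean document; each statement's English description precedes it below -/
import Mathlib

section
/- For every integer n ≥ 3, M(n,2,3,2,1) = n; that is, in every 2-coloring of the edges of the complete 3-uniform hypergraph K^3_n there is a monochromatic 2-tight component whose edges cover all n vertices, and this is optimal. -/
open Finset

/-- The `s`-shadow of a hypergraph `H`: all `s`-element vertex sets contained in
some edge of `H`. -/
def hShadow {V : Type*} [DecidableEq V] (s : ℕ) (H : Finset (Finset V)) :
    Finset (Finset V) :=
  H.biUnion fun e => e.powersetCard s

/-- One step of `t`-tight connectivity: both `a` and `b` are edges of `H` and they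
share at least `t` vertices. -/
def TightStep {V : Type*} [DecidableEq V] (t : ℕ) (H : Finset (Finset V))
    (a b : Finset V) : Prop :=
  a ∈ H ∧ b ∈ H ∧ t ≤ (a ∩ b).card

/-- Two edges lie in the same `t`-tight component iff they are joined by a chain of
edges, consecutive ones sharing at least `t` vertices. -/
def TightConn {V : Type*} [DecidableEq V] (t : ℕ) (H : Finset (Finset V)) :
    Finset V → Finset V → Prop :=
  Relation.ReflTransGen (TightStep t H)

open scoped Classical in
/-- The `t`-tight component of the edge `e` in the hypergraph `H`. -/
noncomputable def tightComponent {V : Type*} [DecidableEq V] (t : ℕ)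
    (H : Finset (Finset V)) (e : Finset V) : Finset (Finset V) :=
  H.filter fun f => TightConn t H e f

/-- The `k`-uniform hypergraph `H i` of edges of `K^k_n` having color `i` under the
coloring `c`. -/
def colorClass (n r k : ℕ) (c : Finset (Fin n) → Fin r) (i : Fin r) :
    Finset (Finset (Fin n)) :=
  (Finset.univ.powersetCard k).filter fun e => c e = i

/-- `M(n,r,k,t,s;c)`: the largest number of vertex `s`-sets contained in the edges of
a monochromatic `t`-tight component of the `r`-coloring `c` of `K^k_n`. -/
noncomputable def Mcol (n r k t s : ℕ) (c : Finset (Fin n) → Fin r) : ℕ :=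
  Finset.univ.sup fun i : Fin r =>
    (colorClass n r k c i).sup fun e =>
      (hShadow s (tightComponent t (colorClass n r k c i) e)).card

/-- `M(n,r,k,t,s)`: the minimum of `M(n,r,k,t,s;c)` over all `r`-colorings `c` of
`K^k_n`. -/
noncomputable def Mmin (n r k t s : ℕ) : ℕ :=
  sInf {m | ∃ c : Finset (Fin n) → Fin r, Mcol n r k t s c = m}

/-! ### Auxiliary material -/

/-- One step in the link of `v`: `a` and `b` are distinct vertices different from `v`
and the triple `{v,a,b}` has color `i`. -/
def PStep {n : ℕ} (c : Finset (Fin n) → Fin 2) (v : Fin n) (i : Fin 2)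
    (a b : Fin n) : Prop :=
  a ≠ b ∧ a ≠ v ∧ b ≠ v ∧ c {v, a, b} = i

lemma triple_comm {n : ℕ} (v a b : Fin n) :
    ({v, a, b} : Finset (Fin n)) = {v, b, a} :=
  congrArg (insert v) (Finset.pair_comm a b)

lemma fin2_eq {i0 x y : Fin 2} (hx : x ≠ i0) (hy : y ≠ i0) : x = y := by
  revert i0 x y; decide

/-- In a 2-coloring of the link of `v`, one color class is connected and spanning. -/
lemma exists_conn {n : ℕ} (c : Finset (Fin n) → Fin 2) (v : Fin n) (hn : 3 ≤ n) :
    ∃ i : Fin 2, ∃ x0 x1 : Fin n, PStep c v i x0 x1 ∧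
      ∀ y : Fin n, y ≠ v → Relation.ReflTransGen (PStep c v i) x0 y := by
  -- pick two distinct vertices `a b` different from `v`
  obtain ⟨a, haE, b, hbE, hab⟩ : ∃ a ∈ Finset.univ.erase v, ∃ b ∈ Finset.univ.erase v, a ≠ b := by
    apply Finset.one_lt_card.mp
    rw [Finset.card_erase_of_mem (Finset.mem_univ v), Finset.card_univ, Fintype.card_fin]
    omega
  have ha : a ≠ v := Finset.ne_of_mem_erase haE
  have hb : b ≠ v := Finset.ne_of_mem_erase hbE
  set i0 := c {v, a, b} with hi0
  by_cases hall : ∀ y : Fin n, y ≠ v → Relation.ReflTransGen (PStep c v i0) a y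
  · exact ⟨i0, a, b, ⟨hab, ha, hb, rfl⟩, hall⟩
  push_neg at hall
  obtain ⟨z, hz, hznc⟩ := hall
  -- key: any triple between a connected and a non-connected vertex avoids color i0
  have key : ∀ u w : Fin n, u ≠ v → w ≠ v →
      Relation.ReflTransGen (PStep c v i0) a u →
      ¬ Relation.ReflTransGen (PStep c v i0) a w → c {v, u, w} ≠ i0 := by
    intro u w hu hw hcu hcw hcol
    have huw : u ≠ w := by rintro rfl; exact hcw hcu
    exact hcw (hcu.tail ⟨huw, hu, hw, hcol⟩)
  have hza : z ≠ a := by rintro rfl; exact hznc Relation.ReflTransGen.refl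
  set i1 := c {v, a, z} with hi1
  have hi1ne : i1 ≠ i0 := key a z ha hz Relation.ReflTransGen.refl hznc
  have haz : PStep c v i1 a z := ⟨hza.symm, ha, hz, rfl⟩
  refine ⟨i1, a, z, haz, fun y hy => ?_⟩
  by_cases hcy : Relation.ReflTransGen (PStep c v i0) a y
  · rcases eq_or_ne y a with rfl | hya
    · exact Relation.ReflTransGen.refl
    · -- path a → z → y in color i1
      have hzy : z ≠ y := by rintro rfl; exact hznc hcy
      have hcol : c {v, y, z} ≠ i0 := key y z hy hz hcy hznc
      have hcol' : c {v, z, y} = i1 := by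
        rw [triple_comm]; exact fin2_eq hcol hi1ne
      exact (Relation.ReflTransGen.single haz).tail ⟨hzy, hz, hy, hcol'⟩
  · have hya : a ≠ y := by rintro rfl; exact hcy Relation.ReflTransGen.refl
    have hcol : c {v, a, y} = i1 := fin2_eq (key a y ha hy Relation.ReflTransGen.refl hcy) hi1ne
    exact Relation.ReflTransGen.single ⟨hya, ha, hy, hcol⟩

lemma mem_tightComponent {V : Type*} [DecidableEq V] {t : ℕ}
    {H : Finset (Finset V)} {e f : Finset V} :
    f ∈ tightComponent t H e ↔ f ∈ H ∧ TightConn t H e f := by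
  classical
  simp [tightComponent]

lemma triple_mem {n : ℕ} {c : Finset (Fin n) → Fin 2} {v : Fin n} {i : Fin 2}
    {a b : Fin n} (h : PStep c v i a b) :
    ({v, a, b} : Finset (Fin n)) ∈ colorClass n 2 3 c i := by
  obtain ⟨hab, ha, hb, hc⟩ := h
  rw [colorClass, Finset.mem_filter, Finset.mem_powersetCard]
  refine ⟨⟨Finset.subset_univ _, ?_⟩, hc⟩
  rw [Finset.card_insert_of_notMem, Finset.card_insert_of_notMem, Finset.card_singleton]
  · simp [hab]
  · simp [Ne.symm ha, Ne.symm hb]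

lemma cover {n : ℕ} {c : Finset (Fin n) → Fin 2} {v : Fin n} {i : Fin 2}
    {x0 x1 : Fin n} (h01 : PStep c v i x0 x1) {y : Fin n}
    (hy : Relation.ReflTransGen (PStep c v i) x0 y) :
    ∃ f ∈ tightComponent 2 (colorClass n 2 3 c i) {v, x0, x1}, v ∈ f ∧ y ∈ f := by
  induction hy with
  | refl =>
      exact ⟨{v, x0, x1}, mem_tightComponent.mpr ⟨triple_mem h01,
        Relation.ReflTransGen.refl⟩, by simp, by simp⟩
  | @tail b y hsteps hstep ih =>
      obtain ⟨f, hf, hvf, hbf⟩ := ih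
      obtain ⟨hfH, hfconn⟩ := mem_tightComponent.mp hf
      have hg : ({v, b, y} : Finset (Fin n)) ∈ colorClass n 2 3 c i := triple_mem hstep
      have hbv : b ≠ v := hstep.2.1
      have hint : 2 ≤ (f ∩ ({v, b, y} : Finset (Fin n))).card := by
        have hsub : ({v, b} : Finset (Fin n)) ⊆ f ∩ {v, b, y} := by
          intro x hx
          rw [Finset.mem_insert, Finset.mem_singleton] at hx
          rcases hx with rfl | rfl
          · exact Finset.mem_inter.mpr ⟨hvf, by simp⟩
          · exact Finset.mem_inter.mpr ⟨hbf, by simp⟩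
        calc 2 = ({v, b} : Finset (Fin n)).card := (Finset.card_pair (Ne.symm hbv)).symm
          _ ≤ _ := Finset.card_le_card hsub
      exact ⟨{v, b, y}, mem_tightComponent.mpr ⟨hg, hfconn.tail ⟨hfH, hg, hint⟩⟩,
        by simp, by simp⟩

lemma main_cover {n : ℕ} (hn : 3 ≤ n) (c : Finset (Fin n) → Fin 2) :
    ∃ i : Fin 2, ∃ e ∈ colorClass n 2 3 c i,
      hShadow 1 (tightComponent 2 (colorClass n 2 3 c i) e) =
        Finset.univ.powersetCard 1 := by
  have hv : 0 < n := by omega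
  set v : Fin n := ⟨0, hv⟩
  obtain ⟨i, x0, x1, h01, hconn⟩ := exists_conn c v hn
  refine ⟨i, {v, x0, x1}, triple_mem h01, ?_⟩
  apply Finset.Subset.antisymm
  · intro s hs
    rw [hShadow, Finset.mem_biUnion] at hs
    obtain ⟨e', _, hs'⟩ := hs
    rw [Finset.mem_powersetCard] at hs' ⊢
    exact ⟨Finset.subset_univ s, hs'.2⟩
  · intro s hs
    rw [Finset.mem_powersetCard] at hs
    obtain ⟨y, rfl⟩ := Finset.card_eq_one.mp hs.2
    have : ∃ f ∈ tightComponent 2 (colorClass n 2 3 c i) {v, x0, x1}, y ∈ f := by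
      rcases eq_or_ne y v with rfl | hyv
      · exact ⟨({v, x0, x1} : Finset (Fin n)), mem_tightComponent.mpr ⟨triple_mem h01,
          Relation.ReflTransGen.refl⟩, by simp⟩
      · obtain ⟨f, hf, _, hyf⟩ := cover h01 (hconn y hyv)
        exact ⟨f, hf, hyf⟩
    obtain ⟨f, hf, hyf⟩ := this
    rw [hShadow, Finset.mem_biUnion]
    refine ⟨f, hf, ?_⟩
    rw [Finset.mem_powersetCard]
    exact ⟨Finset.singleton_subset_iff.mpr hyf, Finset.card_singleton y⟩

lemma mcol_eq {n : ℕ} (hn : 3 ≤ n) (c : Finset (Fin n) → Fin 2) :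
    Mcol n 2 3 2 1 c = n := by
  have hcard : (Finset.univ.powersetCard 1 : Finset (Finset (Fin n))).card = n := by
    rw [Finset.card_powersetCard, Finset.card_univ, Fintype.card_fin, Nat.choose_one_right]
  apply le_antisymm
  · apply Finset.sup_le
    intro i _
    apply Finset.sup_le
    intro e _
    have hsub : hShadow 1 (tightComponent 2 (colorClass n 2 3 c i) e) ⊆
        Finset.univ.powersetCard 1 := by
      intro s hs
      rw [hShadow, Finset.mem_biUnion] at hs
      obtain ⟨e', _, hs'⟩ := hs
      rw [Finset.mem_powersetCard] at hs' ⊢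
      exact ⟨Finset.subset_univ s, hs'.2⟩
    exact le_trans (Finset.card_le_card hsub) (le_of_eq hcard)
  · obtain ⟨i, e, he, hsh⟩ := main_cover hn c
    calc n = (hShadow 1 (tightComponent 2 (colorClass n 2 3 c i) e)).card := by
            rw [hsh, hcard]
      _ ≤ (colorClass n 2 3 c i).sup (fun e =>
            (hShadow 1 (tightComponent 2 (colorClass n 2 3 c i) e)).card) :=
            Finset.le_sup (f := fun e =>
              (hShadow 1 (tightComponent 2 (colorClass n 2 3 c i) e)).card) he
      _ ≤ Mcol n 2 3 2 1 c := by
            rw [Mcol]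
            exact Finset.le_sup (f := fun i : Fin 2 =>
              (colorClass n 2 3 c i).sup fun e =>
                (hShadow 1 (tightComponent 2 (colorClass n 2 3 c i) e)).card)
              (Finset.mem_univ i)

/-- For every `n ≥ 3`, `M(n,2,3,2,1) = n`: in every 2-coloring of `K^3_n` there is a
monochromatic 2-tight component whose edges cover all `n` vertices, and this is
optimal. -/
theorem statement7 (n : ℕ) (hn : 3 ≤ n) :
    Mmin n 2 3 2 1 = n ∧
    ∀ c : Finset (Fin n) → Fin 2, ∃ i : Fin 2, ∃ e ∈ colorClass n 2 3 c i,
      hShadow 1 (tightComponent 2 (colorClass n 2 3 c i) e) =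
        Finset.univ.powersetCard 1 := by
  constructor
  · have hset : {m | ∃ c : Finset (Fin n) → Fin 2, Mcol n 2 3 2 1 c = m} = {n} := by
      ext m
      simp only [Set.mem_setOf_eq, Set.mem_singleton_iff]
      constructor
      · rintro ⟨c, rfl⟩; exact mcol_eq hn c
      · rintro rfl; exact ⟨fun _ => 0, mcol_eq hn _⟩
    rw [Mmin, hset, csInf_singleton]
  · intro c
    exact main_cover hn c
end

section
/- Let n, k, t be positive integers with t + 1 ≤ k ≤ n and t ≤ ⌊2k/3⌋, and let q = ⌊2k/3⌋. Then for every 2-coloring (red/blue) of the edges of K^k_n, there exist a t-tight component C_r of the red hypergraph and a t-tight component C_b of the blue hypergraph such that every q-element subset of the vertex set belongs to E^(q)(C_r) ∪ E^(q)(C_b). -/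
open Finset

/-!
Write `q + p = k`, so `p = ⌈k/3⌉` and `q ≤ 2p`: two `q`-sets fit into a window of `k + p`
vertices, and any two edges inside a window share at least `k - p = q ≥ t` vertices. Call two
`q`-sets conflicting if no monochromatic tight component has edges through both. It suffices to
find a hub, a `q`-set `M` conflicting with no `q`-set: the components through `M` of the two
colors then cover all `q`-sets. If `n + t ≤ 2k` every color class is tightly connected (take
`M = ∅`). Otherwise a window around a conflicting pair `A, B` gives all its edges through `A`
one color and all its edges through `B` the other. Given a conflicting pair `S, T`, let `M` take
`q - p` vertices from each. If `M` conflicted with `U`, a `q`-set `M'` through `q - p` vertices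
of `M ∩ T` (or `M ∩ S`, depending on the colors) and of `U` closes a monochromatic chain from
`S` to `T` or from `M` to `U`.
-/

section Hypergraph

variable {V : Type*} [DecidableEq V] {t : ℕ} {H : Finset (Finset V)} {A B C M : Finset V}

theorem TightStep.symm {a b : Finset V} (h : TightStep t H a b) : TightStep t H b a :=
  ⟨h.2.1, h.1, by rw [inter_comm]; exact h.2.2⟩

theorem TightConn.symm {a b : Finset V} (h : TightConn t H a b) : TightConn t H b a := by
  induction h with
  | refl => exact .refl
  | tail _ hstep ih => exact .head hstep.symm ih

theorem TightConn.of_subset_of_le_card {a b : Finset V} (ha : a ∈ H) (hb : b ∈ H)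
    (hMa : M ⊆ a) (hMb : M ⊆ b) (hM : t ≤ M.card) : TightConn t H a b :=
  .single ⟨ha, hb, hM.trans (card_le_card (subset_inter hMa hMb))⟩

def Linked (t : ℕ) (H : Finset (Finset V)) (A B : Finset V) : Prop :=
  ∃ f ∈ H, ∃ g ∈ H, A ⊆ f ∧ B ⊆ g ∧ TightConn t H f g

theorem Linked.symm (h : Linked t H A B) : Linked t H B A := by
  obtain ⟨f, hf, g, hg, hAf, hBg, hfg⟩ := h
  exact ⟨g, hg, f, hf, hBg, hAf, hfg.symm⟩

theorem Linked.trans (hB : t ≤ B.card) (h₁ : Linked t H A B) (h₂ : Linked t H B C) :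
    Linked t H A C := by
  obtain ⟨f, hf, g, hg, hAf, hBg, hfg⟩ := h₁
  obtain ⟨f', hf', g', hg', hBf', hCg', hfg'⟩ := h₂
  exact ⟨f, hf, g', hg', hAf, hCg',
    hfg.trans ((TightConn.of_subset_of_le_card hg hf' hBg hBf' hB).trans hfg')⟩

theorem linked_of_subset {e : Finset V} (he : e ∈ H) (hA : A ⊆ e) (hB : B ⊆ e) :
    Linked t H A B :=
  ⟨e, he, e, he, hA, hB, .refl⟩

theorem exists_component_shadow
    (hM : ∀ e ∈ H, ∀ g ∈ H, M ⊆ e → M ⊆ g → TightConn t H e g) :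
    ∃ C, (C = ∅ ∨ ∃ e ∈ H, C = tightComponent t H e) ∧
      ∀ U, Linked t H U M → U ∈ hShadow U.card C := by
  by_cases hedge : ∃ e ∈ H, M ⊆ e
  · obtain ⟨e, he, hMe⟩ := hedge
    refine ⟨tightComponent t H e, .inr ⟨e, he, rfl⟩, fun U hU => ?_⟩
    obtain ⟨f, hf, g, hg, hUf, hMg, hfg⟩ := hU
    simp only [hShadow, tightComponent, mem_biUnion, mem_filter, mem_powersetCard, and_true]
    exact ⟨f, ⟨hf, (hM e he g hg hMe hMg).trans hfg.symm⟩, hUf⟩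
  · refine ⟨∅, .inl rfl, fun U hU => ?_⟩
    obtain ⟨-, -, g, hg, -, hMg, -⟩ := hU
    exact absurd ⟨g, hg, hMg⟩ hedge

end Hypergraph

theorem card_union_add_card_le {α : Type*} [DecidableEq α] {A B Z : Finset α}
    (hZA : Z ⊆ A) (hZB : Z ⊆ B) : (A ∪ B).card + Z.card ≤ A.card + B.card := by
  have := card_union_add_card_inter A B
  have := card_le_card (subset_inter hZA hZB)
  omega

theorem card_add_card_le_card_inter_add {α : Type*} [DecidableEq α] {e h W : Finset α}
    (he : e ⊆ W) (hh : h ⊆ W) : e.card + h.card ≤ (e ∩ h).card + W.card := by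
  have := card_union_add_card_inter e h
  have := card_le_card (union_subset he hh)
  omega

theorem fin_two_eq_rev_of_ne {a b : Fin 2} (h : a ≠ b) : a = b.rev := by
  fin_cases a <;> fin_cases b <;> simp_all

section Coloring

variable {n k t r : ℕ} {A B M W : Finset (Fin n)}

theorem mem_colorClass {c : Finset (Fin n) → Fin r} {i : Fin r} {e : Finset (Fin n)} :
    e ∈ colorClass n r k c i ↔ e.card = k ∧ c e = i := by
  simp [colorClass]

theorem linked_colorClass_of_subset {c : Finset (Fin n) → Fin r} {e : Finset (Fin n)}
    (he : e.card = k) (hA : A ⊆ e) (hB : B ⊆ e) :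
    Linked t (colorClass n r k c (c e)) A B :=
  linked_of_subset (mem_colorClass.2 ⟨he, rfl⟩) hA hB

theorem exists_linked (c : Finset (Fin n) → Fin r) (hAB : (A ∪ B).card ≤ k) (hkn : k ≤ n) :
    ∃ i, Linked t (colorClass n r k c i) A B := by
  obtain ⟨e, hABe, he⟩ := exists_superset_card_eq hAB (by simpa using hkn)
  exact ⟨c e, linked_colorClass_of_subset he (subset_union_left.trans hABe)
    (subset_union_right.trans hABe)⟩

theorem linked_of_forall_color {c : Finset (Fin n) → Fin r} {a : Fin r}
    (hcol : ∀ e ⊆ W, e.card = k → A ⊆ e → c e = a) (hAMW : A ∪ M ⊆ W)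
    (hAM : (A ∪ M).card ≤ k) (hkW : k ≤ W.card) :
    Linked t (colorClass n r k c a) A M := by
  obtain ⟨e, hAMe, heW, he⟩ := exists_subsuperset_card_eq hAMW hAM hkW
  have hA : A ⊆ e := subset_union_left.trans hAMe
  rw [← hcol e heW he hA]
  exact linked_colorClass_of_subset he hA (subset_union_right.trans hAMe)

def Conflict (k t : ℕ) (c : Finset (Fin n) → Fin r) (A B : Finset (Fin n)) : Prop :=
  ∀ i, ¬ Linked t (colorClass n r k c i) A B

theorem Conflict.symm {c : Finset (Fin n) → Fin r} (h : Conflict k t c A B) :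
    Conflict k t c B A :=
  fun i hBA => h i hBA.symm

theorem Conflict.color_ne {c : Finset (Fin n) → Fin r} {e h : Finset (Fin n)}
    (hAB : Conflict k t c A B) (he : e.card = k) (hh : h.card = k) (hAe : A ⊆ e) (hBh : B ⊆ h)
    (heh : t ≤ (e ∩ h).card) : c e ≠ c h := fun hc =>
  hAB (c h) ⟨e, mem_colorClass.2 ⟨he, hc⟩, h, mem_colorClass.2 ⟨hh, rfl⟩, hAe, hBh,
    .single ⟨mem_colorClass.2 ⟨he, hc⟩, mem_colorClass.2 ⟨hh, rfl⟩, heh⟩⟩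

/-- `W.card + t ≤ 2 * k` makes any two `k`-subsets of `W` tightly adjacent, so an edge of `W`
through `A` and one through `B` never share a color. -/
theorem Conflict.exists_window_color {c : Finset (Fin n) → Fin 2} (hAB : Conflict k t c A B)
    (hW : W.card + t ≤ 2 * k) (hA : A.card ≤ k) (hB : B.card ≤ k) (hkW : k ≤ W.card)
    (hAW : A ⊆ W) (hBW : B ⊆ W) :
    ∃ a : Fin 2, (∀ e ⊆ W, e.card = k → A ⊆ e → c e = a) ∧
      (∀ h ⊆ W, h.card = k → B ⊆ h → c h = a.rev) := by
  have hne : ∀ e ⊆ W, ∀ h ⊆ W, e.card = k → h.card = k → A ⊆ e → B ⊆ h → c e ≠ c h :=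
    fun e heW h hhW he hh hAe hBh => hAB.color_ne he hh hAe hBh
      (by have := card_add_card_le_card_inter_add heW hhW; omega)
  obtain ⟨e₀, hAe₀, he₀W, he₀⟩ := exists_subsuperset_card_eq hAW hA hkW
  obtain ⟨h₀, hBh₀, hh₀W, hh₀⟩ := exists_subsuperset_card_eq hBW hB hkW
  refine ⟨c e₀, fun e heW he hAe => ?_, fun h hhW hh hBh => ?_⟩
  · rw [fin_two_eq_rev_of_ne (hne e heW h₀ hh₀W he hh₀ hAe hBh₀),
      fin_two_eq_rev_of_ne (hne e₀ he₀W h₀ hh₀W he₀ hh₀ hAe₀ hBh₀)]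
  · rw [← fin_two_eq_rev_of_ne (hne e₀ he₀W h hhW he₀ hh hAe₀ hBh).symm]

end Coloring

section Cover

variable {n k t q p : ℕ} {c : Finset (Fin n) → Fin 2} {S T M U : Finset (Fin n)}

local notation "𝓗" => colorClass n 2 k c

theorem false_of_linked_chain {M' : Finset (Fin n)} {a i : Fin 2}
    (hST : Conflict k t c S T) (hMU : Conflict k t c M U)
    (hT : t ≤ T.card) (hM : t ≤ M.card) (hM' : t ≤ M'.card)
    (hSM : Linked t (𝓗 a) S M) (hTM : Linked t (𝓗 a.rev) T M)
    (hMM' : Linked t (𝓗 a) M M') (hUM' : Linked t (𝓗 a.rev) U M')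
    (hM'T : Linked t (𝓗 i) M' T) : False := by
  rcases eq_or_ne i a with rfl | hi
  · exact hST i (hSM.trans hM (hMM'.trans hM' hM'T))
  · rw [fin_two_eq_rev_of_ne hi] at hM'T
    exact hMU a.rev (hTM.symm.trans hT (hM'T.symm.trans hM' hUM'.symm))

theorem false_of_conflict_of_window_color {Y W : Finset (Fin n)} {a : Fin 2}
    (hqpk : q + p = k) (htq : t ≤ q) (hq : q ≤ 2 * p) (hkn : k ≤ n)
    (hST : Conflict k t c S T) (hMU : Conflict k t c M U)
    (hT : T.card = q) (hM : M.card = q) (hU : U.card = q)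
    (hYM : Y ⊆ M) (hYT : Y ⊆ T) (hY : Y.card = q - p)
    (hSM : Linked t (𝓗 a) S M) (hTM : Linked t (𝓗 a.rev) T M)
    (hMUW : M ∪ U ⊆ W) (hkW : k ≤ W.card)
    (hMcol : ∀ e ⊆ W, e.card = k → M ⊆ e → c e = a)
    (hUcol : ∀ h ⊆ W, h.card = k → U ⊆ h → c h = a.rev) : False := by
  obtain ⟨Z, hZU, hZ⟩ := exists_subset_card_eq (show q - p ≤ U.card by omega)
  have hYZ : (Y ∪ Z).card ≤ q := (card_union_le Y Z).trans (by omega)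
  obtain ⟨M', hYZM', hM'MU, hM'⟩ := exists_subsuperset_card_eq
    (union_subset_union hYM hZU) hYZ (by rw [← hM]; exact card_le_card subset_union_left)
  have hYM' : Y ⊆ M' := subset_union_left.trans hYZM'
  have hZM' : Z ⊆ M' := subset_union_right.trans hYZM'
  have hM'W : M' ⊆ W := hM'MU.trans hMUW
  have hMM' : Linked t (𝓗 a) M M' :=
    linked_of_forall_color hMcol (union_subset (subset_union_left.trans hMUW) hM'W)
      (by have := card_union_add_card_le hYM hYM'; omega) hkW
  have hUM' : Linked t (𝓗 a.rev) U M' :=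
    linked_of_forall_color hUcol (union_subset (subset_union_right.trans hMUW) hM'W)
      (by have := card_union_add_card_le hZU hZM'; omega) hkW
  obtain ⟨i, hM'T⟩ := exists_linked (t := t) c
    (by have := card_union_add_card_le hYM' hYT; omega : (M' ∪ T).card ≤ k) hkn
  exact false_of_linked_chain hST hMU (by omega) (by omega) (by omega) hSM hTM hMM' hUM' hM'T

theorem exists_superset_union_card_eq (hqpk : q + p = k) (hq : q ≤ 2 * p)
    (hn : k + p ≤ n) (hS : S.card = q) (hT : T.card = q) :
    ∃ W : Finset (Fin n), S ∪ T ⊆ W ∧ W.card = k + p :=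
  exists_superset_card_eq ((card_union_le S T).trans (by omega)) (by simpa using hn)

theorem exists_hub_of_conflict (hqpk : q + p = k) (htq : t ≤ q) (hq : q ≤ 2 * p)
    (hn : k + p ≤ n) (hST : Conflict k t c S T) (hS : S.card = q) (hT : T.card = q) :
    ∃ M : Finset (Fin n), M.card = q ∧ ∀ U, U.card = q → ∃ i, Linked t (𝓗 i) U M := by
  obtain ⟨X, hXS, hX⟩ := exists_subset_card_eq (show q - p ≤ S.card by omega)
  obtain ⟨Y, hYT, hY⟩ := exists_subset_card_eq (show q - p ≤ T.card by omega)
  have hXY : (X ∪ Y).card ≤ q := (card_union_le X Y).trans (by omega)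
  obtain ⟨M, hXYM, hMST, hM⟩ := exists_subsuperset_card_eq (union_subset_union hXS hYT) hXY
    (by rw [← hS]; exact card_le_card subset_union_left)
  have hXM : X ⊆ M := subset_union_left.trans hXYM
  have hYM : Y ⊆ M := subset_union_right.trans hXYM
  obtain ⟨W₀, hSTW₀, hW₀⟩ := exists_superset_union_card_eq hqpk hq hn hS hT
  have hMW₀ : M ⊆ W₀ := hMST.trans hSTW₀
  obtain ⟨r, hScol, hTcol⟩ := hST.exists_window_color (by omega) (by omega) (by omega)
    (by omega) (subset_union_left.trans hSTW₀) (subset_union_right.trans hSTW₀)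
  have hSM : Linked t (𝓗 r) S M := linked_of_forall_color hScol
    (union_subset (subset_union_left.trans hSTW₀) hMW₀)
    (by have := card_union_add_card_le hXS hXM; omega) (by omega)
  have hTM : Linked t (𝓗 r.rev) T M := linked_of_forall_color hTcol
    (union_subset (subset_union_right.trans hSTW₀) hMW₀)
    (by have := card_union_add_card_le hYT hYM; omega) (by omega)
  refine ⟨M, hM, fun U hU => ?_⟩
  by_contra hno
  have hMU : Conflict k t c M U := fun i hMU => not_exists.1 hno i hMU.symm
  obtain ⟨W₁, hMUW₁, hW₁⟩ := exists_superset_union_card_eq hqpk hq hn hM hU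
  obtain ⟨a, hMcol, hUcol⟩ := hMU.exists_window_color (by omega) (by omega) (by omega)
    (by omega) (subset_union_left.trans hMUW₁) (subset_union_right.trans hMUW₁)
  rcases eq_or_ne a r with rfl | har
  · exact false_of_conflict_of_window_color hqpk htq hq (by omega) hST hMU hT hM hU
      hYM hYT hY hSM hTM hMUW₁ (by omega) hMcol hUcol
  · rw [fin_two_eq_rev_of_ne har] at hMcol hUcol
    exact false_of_conflict_of_window_color hqpk htq hq (by omega) hST.symm hMU hS hM hU
      hXM hXS hX hTM (by rwa [Fin.rev_rev]) hMUW₁ (by omega) hMcol hUcol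

theorem exists_hub (hqpk : q + p = k) (htq : t ≤ q) (hq : q ≤ 2 * p) (hkn : k ≤ n) :
    ∃ M : Finset (Fin n),
      (∀ i, ∀ e ∈ 𝓗 i, ∀ g ∈ 𝓗 i, M ⊆ e → M ⊆ g → TightConn t (𝓗 i) e g) ∧
      ∀ U, U.card = q → ∃ i, Linked t (𝓗 i) U M := by
  by_cases hsmall : n + t ≤ 2 * k
  · -- any two edges share `2k - n ≥ t` vertices
    refine ⟨∅, fun i e he g hg _ _ => .single ⟨he, hg, ?_⟩, fun U hU =>
      exists_linked c (by simpa [hU] using (show q ≤ k by omega)) hkn⟩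
    have := card_add_card_le_card_inter_add (subset_univ e) (subset_univ g)
    simp only [card_univ, Fintype.card_fin, (mem_colorClass.1 he).1,
      (mem_colorClass.1 hg).1] at this
    omega
  obtain ⟨M, hM, hhub⟩ : ∃ M : Finset (Fin n), M.card = q ∧
      ∀ U, U.card = q → ∃ i, Linked t (𝓗 i) U M := by
    by_cases hconf : ∃ S T : Finset (Fin n), S.card = q ∧ T.card = q ∧ Conflict k t c S T
    · obtain ⟨S, T, hS, hT, hST⟩ := hconf
      exact exists_hub_of_conflict hqpk htq hq (by omega) hST hS hT
    · obtain ⟨M, -, hM⟩ := exists_subset_card_eq (s := (univ : Finset (Fin n))) (n := q)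
        (by simp; omega)
      refine ⟨M, hM, fun U hU => ?_⟩
      by_contra hno
      exact hconf ⟨U, M, hU, hM, fun i hi => hno ⟨i, hi⟩⟩
  exact ⟨M, fun i e he g hg hMe hMg =>
    TightConn.of_subset_of_le_card he hg hMe hMg (by omega), hhub⟩

end Cover

theorem statement15_general (n k t : ℕ) (hkn : k ≤ n)
    (htq : t ≤ 2 * k / 3) (c : Finset (Fin n) → Fin 2) :
    ∃ Cr Cb : Finset (Finset (Fin n)),
      (Cr = ∅ ∨ ∃ e ∈ colorClass n 2 k c 0,
        Cr = tightComponent t (colorClass n 2 k c 0) e) ∧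
      (Cb = ∅ ∨ ∃ e ∈ colorClass n 2 k c 1,
        Cb = tightComponent t (colorClass n 2 k c 1) e) ∧
      ∀ S : Finset (Fin n), S.card = 2 * k / 3 →
        S ∈ hShadow (2 * k / 3) Cr ∪ hShadow (2 * k / 3) Cb := by
  obtain ⟨M, hconn, hhub⟩ :=
    exists_hub (c := c) (q := 2 * k / 3) (p := k - 2 * k / 3) (by omega) htq (by omega) hkn
  obtain ⟨Cr, hCr, hr⟩ := exists_component_shadow (hconn 0)
  obtain ⟨Cb, hCb, hb⟩ := exists_component_shadow (hconn 1)
  refine ⟨Cr, Cb, hCr, hCb, fun S hS => ?_⟩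
  obtain ⟨i, hi⟩ := hhub S hS
  rw [mem_union, ← hS]
  fin_cases i
  · exact .inl (hr S hi)
  · exact .inr (hb S hi)

/-- **Covering by one red and one blue component.** Let `t + 1 ≤ k ≤ n`,
`t ≤ ⌊2k/3⌋`, and `q = ⌊2k/3⌋`. Then for every 2-coloring of `K^k_n` there are a
red `t`-tight component `C_r` and a blue `t`-tight component `C_b` (each possibly
empty) such that every `q`-subset of the vertex set lies in
`E^(q)(C_r) ∪ E^(q)(C_b)`. -/
theorem statement15 (n k t : ℕ) (ht : 0 < t) (htk : t + 1 ≤ k) (hkn : k ≤ n)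
    (htq : t ≤ 2 * k / 3) (c : Finset (Fin n) → Fin 2) :
    ∃ Cr Cb : Finset (Finset (Fin n)),
      (Cr = ∅ ∨ ∃ e ∈ colorClass n 2 k c 0,
        Cr = tightComponent t (colorClass n 2 k c 0) e) ∧
      (Cb = ∅ ∨ ∃ e ∈ colorClass n 2 k c 1,
        Cb = tightComponent t (colorClass n 2 k c 1) e) ∧
      ∀ S : Finset (Fin n), S.card = 2 * k / 3 →
        S ∈ hShadow (2 * k / 3) Cr ∪ hShadow (2 * k / 3) Cb :=
  statement15_general n k t hkn htq c
end

section
/- For every integer n ≥ 3, M(n,2,3,2,3) ≤ C(⌈n/2⌉, 2) · ⌊n/2⌋; that is, there is a 2-coloring of the edges of K^3_n in which every monochromatic 2-tight component has at most C(⌈n/2⌉, 2) · ⌊n/2⌋ edges. -/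
open Finset

/-!
Split the vertices into a set `A` of size `⌈n/2⌉` and its complement, and colour a triple `e`
by the parity of `|e ∩ A|`. Two triples sharing two vertices meet `A` in sizes differing by at
most one, so a tight step inside one colour class preserves `j = |e ∩ A|`. A monochromatic
tight component therefore consists of triples of a single type `j`, of which there are
`C(⌈n/2⌉, j) * C(⌊n/2⌋, 3 - j) ≤ C(⌈n/2⌉, 2) * ⌊n/2⌋`. The 3-shadow of a 3-uniform family is
the family itself.
-/

section Hypergraph

variable {V : Type*} [DecidableEq V]

lemma hShadow_eq_self {s : ℕ} {H : Finset (Finset V)} (hH : ∀ e ∈ H, #e = s) :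
    hShadow s H = H :=
  calc hShadow s H = H.biUnion singleton :=
        biUnion_congr rfl fun e he => by rw [← hH e he, powersetCard_self]
    _ = H := biUnion_singleton_eq_self

lemma tightComponent_subset (t : ℕ) (H : Finset (Finset V)) (e : Finset V) :
    tightComponent t H e ⊆ H := by
  classical
  exact fun _ hf => (mem_filter.1 hf).1

lemma TightConn.eq_of_forall_tightStep {β : Type*} {t : ℕ} {H : Finset (Finset V)}
    {e f : Finset V} (h : TightConn t H e f) {φ : Finset V → β}
    (hφ : ∀ f g, TightStep t H f g → φ f = φ g) : φ e = φ f := by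
  induction h with
  | refl => rfl
  | tail _ hstep ih => exact ih.trans (hφ _ _ hstep)

lemma card_inter_le_card_inter_add_card_sdiff (A f g : Finset V) :
    #(f ∩ A) ≤ #(g ∩ A) + #(f \ g) := by
  refine (card_le_card fun x hx => ?_).trans (card_union_le _ _)
  by_cases x ∈ g <;> simp_all

lemma card_inter_eq_of_two_le_card_inter {A f g : Finset V} (hf : #f = 3) (hg : #g = 3)
    (hfg : 2 ≤ #(f ∩ g)) (hpar : #(f ∩ A) % 2 = #(g ∩ A) % 2) : #(f ∩ A) = #(g ∩ A) := by
  have hfA := card_inter_le_card_inter_add_card_sdiff A f g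
  have hgA := card_inter_le_card_inter_add_card_sdiff A g f
  have hf' := card_inter_add_card_sdiff f g
  have hg' := card_inter_add_card_sdiff g f
  rw [inter_comm] at hg'
  omega

lemma card_filter_card_inter_eq_le [Fintype V] (A : Finset V) (k j : ℕ) :
    #{f ∈ univ.powersetCard k | #(f ∩ A) = j} ≤ (#A).choose j * (#Aᶜ).choose (k - j) := by
  rw [← card_powersetCard j A, ← card_powersetCard (k - j) Aᶜ, ← card_product]
  refine card_le_card_of_injOn (fun f => (f ∩ A, f \ A)) (fun f hf => ?_) fun f _ g _ h => ?_
  · simp only [mem_coe, mem_filter, mem_powersetCard, subset_univ, true_and] at hf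
    have := card_sdiff_add_card_inter f A
    simp only [mem_coe, mem_product, mem_powersetCard]
    exact ⟨⟨inter_subset_right, hf.2⟩, fun x hx => mem_compl.2 (mem_sdiff.1 hx).2, by omega⟩
  · simp only [Prod.mk.injEq] at h
    rw [← sdiff_union_inter f A, ← sdiff_union_inter g A, h.1, h.2]

end Hypergraph

lemma choose_mul_choose_sub_le_choose_two_mul {a b j : ℕ} (hba : b ≤ a) (hab : a ≤ b + 1)
    (hj : j ≤ 3) : a.choose j * b.choose (3 - j) ≤ a.choose 2 * b := by
  have c3a : a.choose 3 * 3 = a.choose 2 * (a - 2) := Nat.choose_succ_right_eq a 2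
  have c3b : b.choose 3 * 3 = b.choose 2 * (b - 2) := Nat.choose_succ_right_eq b 2
  have c2a : a.choose 2 * 2 = a * (a - 1) := by simpa using Nat.choose_succ_right_eq a 1
  have c2b : b.choose 2 * 2 = b * (b - 1) := by simpa using Nat.choose_succ_right_eq b 1
  have mono : b.choose 2 ≤ a.choose 2 := Nat.choose_le_choose 2 hba
  interval_cases j
  · have : b.choose 2 * (b - 2) ≤ a.choose 2 * b := Nat.mul_le_mul mono (Nat.sub_le b 2)
    simp only [Nat.choose_zero_right, one_mul, Nat.sub_zero]
    omega
  · refine Nat.le_of_mul_le_mul_right (c := 2) ?_ two_pos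
    calc a.choose 1 * b.choose 2 * 2 = a * (b * (b - 1)) := by
          rw [Nat.choose_one_right, mul_assoc, c2b]
      _ ≤ a * ((a - 1) * b) := by
          rw [mul_comm b]
          exact Nat.mul_le_mul_left a (Nat.mul_le_mul_right b (by omega))
      _ = a.choose 2 * b * 2 := by rw [mul_right_comm, c2a, mul_assoc]
  · simp
  · have : a.choose 2 * (a - 2) ≤ a.choose 2 * b := Nat.mul_le_mul_left _ (by omega)
    simp only [Nat.sub_self, Nat.choose_zero_right, mul_one]
    omega

lemma card_of_mem_colorClass {n r k : ℕ} {c : Finset (Fin n) → Fin r} {i : Fin r}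
    {e : Finset (Fin n)} (he : e ∈ colorClass n r k c i) : #e = k :=
  (mem_powersetCard.1 (mem_filter.1 he).1).2

lemma Mmin_le_Mcol {n r k t s : ℕ} (c : Finset (Fin n) → Fin r) :
    Mmin n r k t s ≤ Mcol n r k t s c :=
  Nat.sInf_le ⟨c, rfl⟩

def parityColoring {n : ℕ} (A e : Finset (Fin n)) : Fin 2 :=
  ⟨#(e ∩ A) % 2, Nat.mod_lt _ two_pos⟩

lemma tightComponent_parityColoring_subset {n : ℕ} (A : Finset (Fin n)) (i : Fin 2)
    (e : Finset (Fin n)) :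
    tightComponent 2 (colorClass n 2 3 (parityColoring A) i) e ⊆
      {f ∈ (univ : Finset (Fin n)).powersetCard 3 | #(f ∩ A) = #(e ∩ A)} := by
  classical
  intro f hf
  obtain ⟨hfH, hef⟩ := mem_filter.1 hf
  refine mem_filter.2
    ⟨(mem_filter.1 hfH).1, (hef.eq_of_forall_tightStep (φ := fun x => #(x ∩ A)) ?_).symm⟩
  rintro g h ⟨hg, hh, hgh⟩
  simp only [colorClass, mem_filter] at hg hh
  exact card_inter_eq_of_two_le_card_inter (mem_powersetCard.1 hg.1).2
    (mem_powersetCard.1 hh.1).2 hgh (Fin.mk.inj_iff.1 (hg.2.trans hh.2.symm))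

theorem statement17_general (n : ℕ) :
    Mmin n 2 3 2 3 ≤ ((n + 1) / 2).choose 2 * (n / 2) := by
  obtain ⟨A, -, hA⟩ : ∃ A ⊆ (univ : Finset (Fin n)), #A = (n + 1) / 2 :=
    exists_subset_card_eq (by rw [card_univ, Fintype.card_fin]; omega)
  have hAc : #Aᶜ = n / 2 := by rw [card_compl, Fintype.card_fin, hA]; omega
  refine (Mmin_le_Mcol (parityColoring A)).trans ?_
  simp only [Mcol, Finset.sup_le_iff]
  intro i _ e he
  have hj : #(e ∩ A) ≤ 3 := (card_le_card inter_subset_left).trans (card_of_mem_colorClass he).le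
  rw [hShadow_eq_self fun f hf => card_of_mem_colorClass (tightComponent_subset _ _ _ hf)]
  calc _ ≤ #{f ∈ univ.powersetCard 3 | #(f ∩ A) = #(e ∩ A)} :=
        card_le_card (tightComponent_parityColoring_subset A i e)
    _ ≤ _ := card_filter_card_inter_eq_le A 3 _
    _ ≤ _ := by
      rw [hA, hAc]
      exact choose_mul_choose_sub_le_choose_two_mul (by omega) (by omega) hj

/-- For every `n ≥ 3`, `M(n,2,3,2,3) ≤ C(⌈n/2⌉,2) * ⌊n/2⌋`: there is a 2-coloring
of `K^3_n` in which every monochromatic 2-tight component has at most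
`C(⌈n/2⌉,2) * ⌊n/2⌋` edges. -/
theorem statement17 (n : ℕ) (hn : 3 ≤ n) :
    Mmin n 2 3 2 3 ≤ ((n + 1) / 2).choose 2 * (n / 2) :=
  statement17_general n
end
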